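/- Let Z = {P_1,...,P_m} ⊂ P^n be distinct points with r = reg(R/I_Z) the Castelnuovo–Mumford regularity, and L_1,...,L_m the dual linear forms. Then the powers L_1^r, ..., L_m^r are linearly independent over K, i.e., dim_K Span_K{L_1^r,...,L_m^r} = m. -/

import Mathlib

open MvPolynomial

/-- The differential operator on `K[y]` corresponding to the monomial `x^d`. -/
noncomputable def diffMonomial {n : ℕ} (K : Type) [CommRing K] (d : Fin n →₀ ℕ) :
    Module.End K (MvPolynomial (Fin n) K) :=
  ((List.finRange n).map fun i => (((pderiv i : Derivation K (MvPolynomial (Fin n) K) (MvPolynomial (Fin n) K)).toLinearMap) ^ d i)).prod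

/-- The apolarity action `f ∘ G` of `R = K[x]` on `S = K[y]` by partial differentiation. -/
noncomputable def apolar {n : ℕ} {K : Type} [CommRing K]
    (f G : MvPolynomial (Fin n) K) : MvPolynomial (Fin n) K :=
  f.support.sum fun d => f.coeff d • diffMonomial K d G

/-- The dual linear form `L = a_0 y_0 + ⋯ + a_n y_n` of a point with coordinates `a`. -/
noncomputable def dualForm {n : ℕ} {K : Type} [CommRing K] (a : Fin n → K) :
    MvPolynomial (Fin n) K :=
  ∑ j, C (a j) * X j

/-- Hilbert function of `R/I` in degree `j`. -/
noncomputable def HF {n : ℕ} {K : Type} [Field K]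
    (I : Ideal (MvPolynomial (Fin n) K)) (j : ℕ) : ℕ :=
  Module.finrank K ((homogeneousSubmodule (Fin n) K j).map (Ideal.Quotient.mkₐ K I).toLinearMap)

/-- The socle of `R/I`. -/
noncomputable def socle {n : ℕ} {K : Type} [Field K]
    (I : Ideal (MvPolynomial (Fin n) K)) : Submodule K (MvPolynomial (Fin n) K ⧸ I) :=
  ⨅ i : Fin n, LinearMap.ker (LinearMap.mulLeft K (Ideal.Quotient.mk I (X i)))

/-- `R/I` is Artinian Gorenstein. -/
def ArtinianGorenstein {n : ℕ} {K : Type} [Field K]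
    (I : Ideal (MvPolynomial (Fin n) K)) : Prop :=
  FiniteDimensional K (MvPolynomial (Fin n) K ⧸ I) ∧ Module.finrank K (socle I) = 1

/-!
The forms of degree `r` in `I` are exactly those vanishing at the points `a i`, so `HF I r = m`
says that evaluation at the points maps the forms of degree `r` onto `K^m`: for every `k` there is
a form `f_k` of degree `r` with `f_k (a i) = δ_ik`. In characteristic zero, pairing coefficients
with weights `1 / multinomial` gives a functional `φ_f` with `φ_f (L_b ^ r) = f b` for every form
`f` of degree `r`, because `L_b ^ r` has coefficients `multinomial d * b ^ d`. The functionals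
`φ_{f_k}` are then dual to the family `L_i ^ r`.
-/

theorem linearIndependent_of_forall_exists_dual {ι R M : Type*} [Fintype ι] [DecidableEq ι]
    [CommRing R] [AddCommGroup M] [Module R M] {v : ι → M}
    (h : ∀ c : ι → R, ∃ φ : Module.Dual R M, ∀ i, φ (v i) = c i) : LinearIndependent R v := by
  rw [Fintype.linearIndependent_iff]
  intro g hg k
  obtain ⟨φ, hφ⟩ := h (Pi.single k 1)
  simpa [hφ, Pi.single_apply] using congrArg φ hg

theorem LinearMap.finrank_range_eq_of_ker_eq {R M N P : Type*} [Ring R] [AddCommGroup M]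
    [AddCommGroup N] [AddCommGroup P] [Module R M] [Module R N] [Module R P]
    {f : M →ₗ[R] N} {g : M →ₗ[R] P} (h : LinearMap.ker f = LinearMap.ker g) :
    Module.finrank R (LinearMap.range f) = Module.finrank R (LinearMap.range g) :=
  (f.quotKerEquivRange.symm.trans
    ((Submodule.quotEquivOfEq _ _ h).trans g.quotKerEquivRange)).finrank_eq

namespace MvPolynomial

variable {σ : Type*} {K : Type}

theorem IsHomogeneous.eval_smul [CommSemiring K] {f : MvPolynomial σ K} {r : ℕ}
    (hf : f.IsHomogeneous r) (t : K) (x : σ → K) : eval (t • x) f = t ^ r * eval x f := by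
  rw [eval_eq, eval_eq, Finset.mul_sum]
  refine Finset.sum_congr rfl fun d hd => ?_
  simp only [Pi.smul_apply, smul_eq_mul, mul_pow, Finset.prod_mul_distrib,
    Finset.prod_pow_eq_pow_sum, ← hf.degree_eq_sum_deg_support hd]
  ring

theorem coeff_dualForm_pow [CommRing K] {n : ℕ} (b : Fin n → K) (d : Fin n →₀ ℕ) (r : ℕ) :
    coeff d (dualForm b ^ r) =
      if d.sum (fun _ e ↦ e) = r then d.multinomial * d.prod (fun j e ↦ b j ^ e) else 0 := by
  rw [← coeff_linearCombination_X_pow_of_fintype]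
  simp only [dualForm, smul_eq_C_mul]

/-- For forms `f`, `G` of degree `r`, `apolar f G = C (r ! * apolarityFunctional f G)`. -/
noncomputable def apolarityFunctional [Field K] (f : MvPolynomial σ K) :
    Module.Dual K (MvPolynomial σ K) :=
  ∑ d ∈ f.support, (coeff d f / d.multinomial) • lcoeff K d

theorem apolarityFunctional_dualForm_pow [Field K] [CharZero K] {n : ℕ}
    {f : MvPolynomial (Fin n) K} {r : ℕ} (hf : f.IsHomogeneous r) (b : Fin n → K) :
    apolarityFunctional f (dualForm b ^ r) = eval b f := by
  rw [apolarityFunctional, LinearMap.sum_apply, eval_eq]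
  refine Finset.sum_congr rfl fun d hd => ?_
  have hdeg : d.sum (fun _ e ↦ e) = r := (hf.degree_eq_sum_deg_support hd).symm
  have hmult : (d.multinomial : K) ≠ 0 := by
    rw [Finsupp.multinomial_eq]; exact_mod_cast (Nat.multinomial_pos _ _).ne'
  rw [LinearMap.smul_apply, lcoeff_apply, coeff_dualForm_pow, if_pos hdeg, smul_eq_mul,
    Finsupp.prod]
  field_simp

theorem IsHomogeneous.mem_iff_forall_eval_eq_zero [CommSemiring K] {ι : Type*} {a : ι → σ → K}
    {I : Ideal (MvPolynomial σ K)} (hI : ∀ f, f ∈ I ↔ ∀ i, ∀ t : K, eval (t • a i) f = 0)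
    {f : MvPolynomial σ K} {r : ℕ} (hf : f.IsHomogeneous r) :
    f ∈ I ↔ ∀ i, eval (a i) f = 0 := by
  simp only [hI, hf.eval_smul]
  exact ⟨fun h i => by simpa using h i 1, fun h i t => by rw [h i, mul_zero]⟩

theorem exists_isHomogeneous_eval_eq_of_HF_eq [Field K] {n m : ℕ} {a : Fin m → Fin n → K}
    {I : Ideal (MvPolynomial (Fin n) K)} (hI : ∀ f, f ∈ I ↔ ∀ i, ∀ t : K, eval (t • a i) f = 0)
    {r : ℕ} (hr : HF I r = m) (c : Fin m → K) :
    ∃ f : MvPolynomial (Fin n) K, f.IsHomogeneous r ∧ ∀ i, eval (a i) f = c i := by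
  set p := homogeneousSubmodule (Fin n) K r
  let evalAt : p →ₗ[K] Fin m → K := LinearMap.pi fun i => (aeval (a i)).toLinearMap ∘ₗ p.subtype
  let toQuot := (Ideal.Quotient.mkₐ K I).toLinearMap ∘ₗ p.subtype
  have hker : LinearMap.ker evalAt = LinearMap.ker toQuot := by
    ext ⟨f, hf⟩
    change (fun i => eval (a i) f) = 0 ↔ Ideal.Quotient.mk I f = 0
    rw [Ideal.Quotient.eq_zero_iff_mem, IsHomogeneous.mem_iff_forall_eval_eq_zero hI hf]
    exact _root_.funext_iff
  have hrange : LinearMap.range evalAt = ⊤ := by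
    refine Submodule.eq_top_of_finrank_eq ?_
    rw [LinearMap.finrank_range_eq_of_ker_eq hker, LinearMap.range_comp, Submodule.range_subtype,
      Module.finrank_fin_fun]
    exact hr
  obtain ⟨⟨f, hf⟩, hfc⟩ := LinearMap.range_eq_top.mp hrange c
  exact ⟨f, hf, fun i => by simpa [evalAt] using congrFun hfc i⟩

end MvPolynomial

theorem powers_at_regularity_linearIndependent_general (K : Type) [Field K] [CharZero K] (n m : ℕ)
    (a : Fin m → Fin (n + 1) → K)
    (I : Ideal (MvPolynomial (Fin (n + 1)) K))
    (hI : ∀ f, f ∈ I ↔ ∀ i, ∀ t : K, eval (t • a i) f = 0)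
    (r : ℕ) (hreg : IsLeast {j : ℕ | HF I j = m} r) :
    LinearIndependent K (fun i => dualForm (a i) ^ r) ∧
      Module.finrank K (Submodule.span K (Set.range fun i => dualForm (a i) ^ r)) = m := by
  have hli : LinearIndependent K (fun i => dualForm (a i) ^ r) := by
    refine linearIndependent_of_forall_exists_dual fun c => ?_
    obtain ⟨f, hf, hfc⟩ := exists_isHomogeneous_eval_eq_of_HF_eq hI hreg.1 c
    exact ⟨apolarityFunctional f, fun i => by rw [apolarityFunctional_dualForm_pow hf, hfc]⟩
  exact ⟨hli, by rw [finrank_span_eq_card hli, Fintype.card_fin]⟩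

/-- for distinct points with `r = reg(R/I_Z)` (the least degree where the
Hilbert function reaches `m`), the powers `L_1^r, …, L_m^r` are linearly independent, i.e.
their span has dimension `m`. -/
theorem powers_at_regularity_linearIndependent (K : Type) [Field K] [CharZero K] (n m : ℕ)
    (a : Fin m → Fin (n + 1) → K) (ha : ∀ i, a i ≠ 0)
    (hdist : ∀ i j, i ≠ j → ∀ t : K, a i ≠ t • a j)
    (I : Ideal (MvPolynomial (Fin (n + 1)) K))
    (hI : ∀ f, f ∈ I ↔ ∀ i, ∀ t : K, eval (t • a i) f = 0)
    (r : ℕ) (hreg : IsLeast {j : ℕ | HF I j = m} r) :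
    LinearIndependent K (fun i => dualForm (a i) ^ r) ∧
      Module.finrank K (Submodule.span K (Set.range fun i => dualForm (a i) ^ r)) = m :=
  powers_at_regularity_linearIndependent_general K n m a I hI r hreg
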